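/- arXiv:1910.05948 — 4 statements merged into one kernel-verified Lean document; each statement's English description precedes it below -/
import Mathlib

section
/- Let $A$ be an $m\times m$ complex matrix, $B$ an $m\times 1$ complex matrix, $C$ a $1\times m$ complex matrix, $L$ an $m\times 1$ complex matrix, and $\tau\in\mathbb{R}$. Set $\bar A = A - e^{\tau A} L C e^{-\tau A}$. Fix $s\in\mathbb{C}$ with $\mathrm{Re}(s)\ge 0$, and assume both $\det(sI-\bar A)\neq 0$ and $\det\begin{pmatrix} sI-A & B \\ C e^{-\tau A} & 0\end{pmatrix}\neq 0$. Then the scalar $r(s) = C e^{-\tau A}(sI-\bar A)^{-1}B$ is nonzero. -/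
/-!
Since `sI - Ā = (sI - A) + (e^{τA} L)(C e^{-τA})`, the bordered matrix built on `sI - Ā` arises
from the one built on `sI - A` by a block row operation and has the same nonzero determinant.
Its Schur complement with respect to the invertible block `sI - Ā` is `-r(s)`, so `r(s) ≠ 0`.
-/

open Matrix NormedSpace

namespace Matrix

variable {m n R : Type*} [Fintype m] [DecidableEq m] [Fintype n] [DecidableEq n]

theorem det_fromBlocks_add_mul_zero [CommRing R] (P : Matrix m m R) (X : Matrix m n R)
    (B : Matrix m n R) (C : Matrix n m R) :
    (fromBlocks (P + X * C) B C 0).det = (fromBlocks P B C 0).det := by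
  have hrow : fromBlocks 1 X 0 1 * fromBlocks P B C 0 = fromBlocks (P + X * C) B C 0 := by
    rw [fromBlocks_multiply]
    congr 1 <;> simp
  rw [← hrow, det_mul, det_fromBlocks_zero₂₁, det_one, det_one, one_mul, one_mul]

theorem det_mul_inv_mul_ne_zero_of_det_fromBlocks_ne_zero [Field R] {M : Matrix m m R}
    (hM : M.det ≠ 0) {B : Matrix m n R} {C : Matrix n m R}
    (h : (fromBlocks M B C 0).det ≠ 0) : (C * M⁻¹ * B).det ≠ 0 := by
  let _ : Invertible M := M.invertibleOfIsUnitDet (isUnit_iff_ne_zero.mpr hM)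
  rw [det_fromBlocks₁₁, invOf_eq_nonsing_inv, zero_sub, det_neg] at h
  exact right_ne_zero_of_mul (right_ne_zero_of_mul h)

end Matrix

theorem stmt2_general (m : ℕ) (A : Matrix (Fin m) (Fin m) ℂ) (B : Matrix (Fin m) (Fin 1) ℂ)
    (C : Matrix (Fin 1) (Fin m) ℂ) (L : Matrix (Fin m) (Fin 1) ℂ) (τ : ℝ) (s : ℂ)
    (Abar : Matrix (Fin m) (Fin m) ℂ)
    (hAbar : Abar = A - exp ((τ : ℂ) • A) * L * C * exp (-(τ : ℂ) • A))
    (hdet1 : (s • (1 : Matrix (Fin m) (Fin m) ℂ) - Abar).det ≠ 0)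
    (hdet2 : (fromBlocks (s • (1 : Matrix (Fin m) (Fin m) ℂ) - A) B
        (C * exp (-(τ : ℂ) • A)) (0 : Matrix (Fin 1) (Fin 1) ℂ)).det ≠ 0) :
    (C * exp (-(τ : ℂ) • A) * (s • (1 : Matrix (Fin m) (Fin m) ℂ) - Abar)⁻¹ * B) 0 0 ≠ 0 := by
  have hsplit : s • (1 : Matrix (Fin m) (Fin m) ℂ) - Abar =
      (s • 1 - A) + exp ((τ : ℂ) • A) * L * (C * exp (-(τ : ℂ) • A)) := by
    rw [hAbar, ← Matrix.mul_assoc]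
    abel
  rw [← det_fromBlocks_add_mul_zero _ (exp ((τ : ℂ) • A) * L), ← hsplit] at hdet2
  simpa only [det_fin_one] using det_mul_inv_mul_ne_zero_of_det_fromBlocks_ne_zero hdet1 hdet2

/-- Lemma 1 of the paper: nonvanishing of the scalar transfer function
`r(s) = C e^{-τA}(sI - Ā)⁻¹ B` in the closed right half-plane. -/
theorem stmt2 (m : ℕ) (A : Matrix (Fin m) (Fin m) ℂ) (B : Matrix (Fin m) (Fin 1) ℂ)
    (C : Matrix (Fin 1) (Fin m) ℂ) (L : Matrix (Fin m) (Fin 1) ℂ) (τ : ℝ) (s : ℂ)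
    (Abar : Matrix (Fin m) (Fin m) ℂ)
    (hAbar : Abar = A - exp ((τ : ℂ) • A) * L * C * exp (-(τ : ℂ) • A))
    (hs : 0 ≤ s.re)
    (hdet1 : (s • (1 : Matrix (Fin m) (Fin m) ℂ) - Abar).det ≠ 0)
    (hdet2 : (fromBlocks (s • (1 : Matrix (Fin m) (Fin m) ℂ) - A) B
        (C * exp (-(τ : ℂ) • A)) (0 : Matrix (Fin 1) (Fin 1) ℂ)).det ≠ 0) :
    (C * exp (-(τ : ℂ) • A) * (s • (1 : Matrix (Fin m) (Fin m) ℂ) - Abar)⁻¹ * B) 0 0 ≠ 0 :=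
  stmt2_general m A B C L τ s Abar hAbar hdet1 hdet2
end

section
/- Let $A_0$ be an $n\times n$ complex matrix, $B_0$ an $n\times 1$ complex matrix, $C_0$ a $1\times n$ complex matrix, and $F_0$ a $1\times n$ complex matrix. Set $\hat A_0 = A_0 - B_0 F_0$. Fix $s\in\mathbb{C}$ with $\mathrm{Re}(s)\ge 0$, and assume both $\det(sI-\hat A_0)\neq 0$ and $\det\begin{pmatrix} sI-A_0 & B_0 \\ C_0 & 0\end{pmatrix}\neq 0$. Then the scalar $W_0(s) = C_0(sI-\hat A_0)^{-1}B_0$ is nonzero. -/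
/-!
Writing `A₀ = Â₀ + B₀ F₀`, the block matrix `[[sI - A₀, B₀], [C₀, 0]]` is obtained from
`[[sI - Â₀, B₀], [C₀, 0]]` by adding the last column times `-F₀` to the first block column,
which does not change the determinant. By the Schur complement, the latter determinant equals
`-det(sI - Â₀) · W₀(s)`, so it vanishes exactly when `W₀(s)` does.
-/

open Matrix

namespace Matrix

variable {m n R : Type*} [Fintype m] [Fintype n] [DecidableEq m] [DecidableEq n] [CommRing R]

theorem det_fromBlocks_add_mul_right (A : Matrix m m R) (B : Matrix m n R) (C : Matrix n m R)
    (D : Matrix n n R) (F : Matrix n m R) :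
    (fromBlocks (A + B * F) B (C + D * F) D).det = (fromBlocks A B C D).det := by
  have hcol : fromBlocks (A + B * F) B (C + D * F) D
      = fromBlocks A B C D * fromBlocks 1 0 F 1 := by
    rw [fromBlocks_multiply]
    simp [add_comm]
  rw [hcol, det_mul, det_fromBlocks_zero₁₂, det_one, one_mul, det_one, mul_one]

theorem det_fromBlocks_zero₂₂_fin_one (M : Matrix m m R) (B : Matrix m (Fin 1) R)
    (C : Matrix (Fin 1) m R) (hM : IsUnit M.det) :
    (fromBlocks M B C 0).det = -(M.det * (C * M⁻¹ * B) 0 0) := by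
  have := invertibleOfIsUnitDet M hM
  rw [det_fromBlocks₁₁, invOf_eq_nonsing_inv, det_fin_one, zero_sub, neg_apply, mul_neg]

end Matrix

theorem stmt3_general (n : ℕ) (A0 : Matrix (Fin n) (Fin n) ℂ) (B0 : Matrix (Fin n) (Fin 1) ℂ)
    (C0 : Matrix (Fin 1) (Fin n) ℂ) (F0 : Matrix (Fin 1) (Fin n) ℂ) (s : ℂ)
    (Ahat : Matrix (Fin n) (Fin n) ℂ) (hAhat : Ahat = A0 - B0 * F0)
    (hdet1 : (s • (1 : Matrix (Fin n) (Fin n) ℂ) - Ahat).det ≠ 0)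
    (hdet2 : (fromBlocks (s • (1 : Matrix (Fin n) (Fin n) ℂ) - A0) B0
        C0 (0 : Matrix (Fin 1) (Fin 1) ℂ)).det ≠ 0) :
    (C0 * (s • (1 : Matrix (Fin n) (Fin n) ℂ) - Ahat)⁻¹ * B0) 0 0 ≠ 0 := by
  have hA0 : s • (1 : Matrix (Fin n) (Fin n) ℂ) - A0
      = (s • 1 - Ahat) + B0 * (-F0) := by
    rw [hAhat, Matrix.mul_neg]
    abel
  have hC0 : C0 = C0 + (0 : Matrix (Fin 1) (Fin 1) ℂ) * (-F0) := by
    rw [Matrix.zero_mul, add_zero]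
  intro hW
  apply hdet2
  rw [hA0, hC0, det_fromBlocks_add_mul_right,
    det_fromBlocks_zero₂₂_fin_one _ _ _ (isUnit_iff_ne_zero.mpr hdet1), hW, mul_zero, neg_zero]

/-- Nonvanishing of `W₀(s) = C₀(sI - Â₀)⁻¹ B₀` in the closed right half-plane. -/
theorem stmt3 (n : ℕ) (A0 : Matrix (Fin n) (Fin n) ℂ) (B0 : Matrix (Fin n) (Fin 1) ℂ)
    (C0 : Matrix (Fin 1) (Fin n) ℂ) (F0 : Matrix (Fin 1) (Fin n) ℂ) (s : ℂ)
    (Ahat : Matrix (Fin n) (Fin n) ℂ) (hAhat : Ahat = A0 - B0 * F0)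
    (hs : 0 ≤ s.re)
    (hdet1 : (s • (1 : Matrix (Fin n) (Fin n) ℂ) - Ahat).det ≠ 0)
    (hdet2 : (fromBlocks (s • (1 : Matrix (Fin n) (Fin n) ℂ) - A0) B0
        C0 (0 : Matrix (Fin 1) (Fin 1) ℂ)).det ≠ 0) :
    (C0 * (s • (1 : Matrix (Fin n) (Fin n) ℂ) - Ahat)⁻¹ * B0) 0 0 ≠ 0 :=
  stmt3_general n A0 B0 C0 F0 s Ahat hAhat hdet1 hdet2
end

section
/- Let $s\in\mathbb{C}$, $q_1,q_2>0$, $c_1,c_2,p,q\in\mathbb{R}$, and $\xi\in\mathbb{C}$. Suppose $\alpha,\beta:\mathbb{R}\to\mathbb{C}$ are differentiable on $[0,1]$ and satisfy $s\,\alpha(x) = -q_1\alpha'(x) - c_1\alpha(x)$ and $s\,\beta(x) = q_2\beta'(x) - c_2\beta(x)$ for all $x\in[0,1]$, together with the boundary conditions $\alpha(0) = p\,\beta(0) + \xi$ and $\beta(1) = q\,\alpha(1)$. Then, with $h(s) = 1 - pq\, e^{-(\frac{c_2}{q_2}+\frac{c_1}{q_1})}\, e^{-(\frac{1}{q_2}+\frac{1}{q_1})s}$,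 for all $x\in[0,1]$: $h(s)\,\alpha(x) = e^{-\frac{(c_1+s)}{q_1}x}\,\xi$ and $h(s)\,\beta(x) = q\, e^{-\frac{(c_2+s)}{q_2}(1-x) - \frac{(c_1+s)}{q_1}}\,\xi$. -/
/-!
Each transport equation is a linear ODE `f' = k f` in `x`, so `α x = e^{k₁ x} α 0` and
`β x = e^{k₂ x} β 0` with `k₁ = -(c₁ + s)/q₁`, `k₂ = (c₂ + s)/q₂`. The boundary condition at
`x = 1` expresses `β 0` through `α 0`, and substituting it into the one at `x = 0` closes the
loop: `h(s) α 0 = ξ`, where `h(s) = 1 - p q e^{k₁ - k₂}` is the round-trip gain. Both formulas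
follow by multiplying the exponential profiles by `h(s)`.
-/

open Complex Set

theorem eq_exp_mul_of_hasDerivAt {k : ℂ} {f : ℝ → ℂ} {a b : ℝ}
    (hf : ∀ x ∈ Icc a b, HasDerivAt f (k * f x) x) :
    ∀ x ∈ Icc a b, f x = exp (k * (x - a)) * f a := by
  set g : ℝ → ℂ := fun x => exp (-k * (x - a)) * f x with hg
  have hg' : ∀ x ∈ Icc a b, HasDerivAt g 0 x := by
    intro x hx
    have hlin : HasDerivAt (fun y : ℝ => -k * ((y : ℂ) - a)) (-k) x := by
      simpa using ((ofRealCLM.hasDerivAt (x := x)).sub_const (a : ℂ)).const_mul (-k)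
    exact (hlin.cexp.mul (hf x hx)).congr_deriv (by ring)
  have hconst := constant_of_has_deriv_right_zero
    (fun x hx => (hg' x hx).continuousAt.continuousWithinAt)
    (fun x hx => (hg' x (Ico_subset_Icc_self hx)).hasDerivWithinAt)
  intro x hx
  have hx' := hconst x hx
  simp only [hg, sub_self, mul_zero, exp_zero, one_mul] at hx'
  rw [← hx', ← mul_assoc, ← exp_add]
  simp

theorem eq_exp_mul_of_transport {s a c : ℂ} (ha : a ≠ 0) {f : ℝ → ℂ} {x₀ x₁ : ℝ}
    (hd : ∀ x ∈ Icc x₀ x₁, DifferentiableAt ℝ f x)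
    (h : ∀ x ∈ Icc x₀ x₁, s * f x = a * deriv f x - c * f x) :
    ∀ x ∈ Icc x₀ x₁, f x = exp ((c + s) / a * (x - x₀)) * f x₀ :=
  eq_exp_mul_of_hasDerivAt fun x hx => by
    refine (hd x hx).hasDerivAt.congr_deriv ?_
    field_simp
    linear_combination -h x hx

/-- Frequency-domain solution of the `2×2` cascade of transport PDEs on `[0,1]`:
`h(s) α(x) = e^{-(c₁+s)x/q₁} ξ` and `h(s) β(x) = q e^{-(c₂+s)(1-x)/q₂ - (c₁+s)/q₁} ξ`. -/
theorem stmt8 (s : ℂ) (q1 q2 c1 c2 p q : ℝ) (hq1 : 0 < q1) (hq2 : 0 < q2) (ξ : ℂ)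
    (α β : ℝ → ℂ)
    (hαd : ∀ x ∈ Set.Icc (0 : ℝ) 1, DifferentiableAt ℝ α x)
    (hβd : ∀ x ∈ Set.Icc (0 : ℝ) 1, DifferentiableAt ℝ β x)
    (hα : ∀ x ∈ Set.Icc (0 : ℝ) 1,
      s * α x = -(q1 : ℂ) * deriv α x - (c1 : ℂ) * α x)
    (hβ : ∀ x ∈ Set.Icc (0 : ℝ) 1,
      s * β x = (q2 : ℂ) * deriv β x - (c2 : ℂ) * β x)
    (hbc0 : α 0 = (p : ℂ) * β 0 + ξ) (hbc1 : β 1 = (q : ℂ) * α 1) :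
    ∀ x ∈ Set.Icc (0 : ℝ) 1,
      ((1 : ℂ) - ((p * q : ℝ) : ℂ) * Complex.exp (-((c2 / q2 + c1 / q1 : ℝ) : ℂ)) *
          Complex.exp (-((1 / q2 + 1 / q1 : ℝ) : ℂ) * s)) * α x
        = Complex.exp (-(((c1 : ℂ) + s) / (q1 : ℂ)) * (x : ℂ)) * ξ ∧
      ((1 : ℂ) - ((p * q : ℝ) : ℂ) * Complex.exp (-((c2 / q2 + c1 / q1 : ℝ) : ℂ)) *
          Complex.exp (-((1 / q2 + 1 / q1 : ℝ) : ℂ) * s)) * β x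
        = (q : ℂ) * Complex.exp (-(((c2 : ℂ) + s) / (q2 : ℂ)) * (1 - (x : ℂ))
            - ((c1 : ℂ) + s) / (q1 : ℂ)) * ξ := by
  have hq1' : (q1 : ℂ) ≠ 0 := by exact_mod_cast hq1.ne'
  have hq2' : (q2 : ℂ) ≠ 0 := by exact_mod_cast hq2.ne'
  set ka : ℂ := -((c1 + s) / q1) with hka
  set kb : ℂ := (c2 + s) / q2 with hkb
  have hαx : ∀ x ∈ Icc (0 : ℝ) 1, α x = exp (ka * x) * α 0 := by
    simpa [ka, div_neg] using eq_exp_mul_of_transport (neg_ne_zero.2 hq1') hαd hα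
  have hβx : ∀ x ∈ Icc (0 : ℝ) 1, β x = exp (kb * x) * β 0 := by
    simpa using eq_exp_mul_of_transport hq2' hβd hβ
  have hgain : 1 - ((p * q : ℝ) : ℂ) * exp (-((c2 / q2 + c1 / q1 : ℝ) : ℂ)) *
      exp (-((1 / q2 + 1 / q1 : ℝ) : ℂ) * s) = 1 - p * q * exp (ka - kb) := by
    rw [mul_assoc, ← exp_add, hka, hkb]
    push_cast
    ring_nf
  have hβ0 : β 0 = q * exp (ka - kb) * α 0 := by
    have h1 := hbc1
    rw [hβx 1 (right_mem_Icc.2 zero_le_one), hαx 1 (right_mem_Icc.2 zero_le_one)] at h1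
    simp only [ofReal_one, mul_one] at h1
    rw [exp_sub]
    field_simp
    linear_combination h1
  have hα0 : (1 - p * q * exp (ka - kb)) * α 0 = ξ := by
    linear_combination hbc0 + p * hβ0
  intro x hx
  rw [hgain]
  refine ⟨?_, ?_⟩
  · rw [hαx x hx]
    linear_combination exp (ka * x) * hα0
  · rw [hβx x hx, hβ0, show -kb * (1 - x) - (c1 + s) / q1 = kb * x + (ka - kb) by ring, exp_add]
    linear_combination q * exp (kb * x) * exp (ka - kb) * hα0
end

section
/- Let $s\in\mathbb{C}$ with $\mathrm{Re}(s)\ge 0$, let $q_1,q_2>0$, $c_1,c_2,p,q\in\mathbb{R}$, $\tau>0$, and $\xi\in\mathbb{C}$. Suppose $\alpha,\beta:\mathbb{R}\to\mathbb{C}$ are differentiable on $[0,1]$ satisfying $s\,\alpha(x) = -q_1\alpha'(x) - c_1\alpha(x)$, $s\,\beta(x) = q_2\beta'(x) - c_2\beta(x)$ on $[0,1]$, $\alpha(0) = p\beta(0)+\xi$, $\beta(1) = q\alpha(1)$. Let $\hat A_1$ be an $m\times m$ complex matrix all of whose eigenvalues have negative real part, $B_1$ an $m\times 1$ complex matrix,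 $C_1$ a $1\times m$ complex matrix, and $\hat Y\in\mathbb{C}^m$ with $(sI-\hat A_1)\hat Y = B_1\alpha(1)$. Suppose further $v:\mathbb{R}\to\mathbb{C}$ is differentiable on $[1,2]$ with $s\,v(x) = -\tfrac{1}{\tau}v'(x)$ on $[1,2]$ and $v(1) = C_1\hat Y$. Then, with $h(s) = 1 - pq\, e^{-(\frac{c_2}{q_2}+\frac{c_1}{q_1})}\, e^{-(\frac{1}{q_2}+\frac{1}{q_1})s}$: $h(s)\,\hat Y = (sI-\hat A_1)^{-1}B_1\, e^{-\frac{(c_1+s)}{q_1}}\,\xi$ and $h(s)\,v(x) = C_1(sI-\hat A_1)^{-1}B_1\, e^{-\frac{(c_1+s)}{q_1}}\, e^{-\tau(x-1)s}\,\xi$ for all $x\in[1,2]$. -/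
/-!
Each transport equation is a scalar linear ODE in `x`, so its solution is an exponential.
Propagating `α(0)` across `[0,1]`, reflecting at `x = 1`, propagating `β` back and reflecting at
`x = 0` closes the loop `h(s) α(0) = ξ`; the Hurwitz hypothesis makes `sI - Â₁` invertible for
`Re s ≥ 0`, and the delay line `v` multiplies the output `C₁ Ŷ` by `e^{-τ(x-1)s}`.
-/

open Matrix Set

theorem eq_mul_cexp_of_deriv_eq_mul {f : ℝ → ℂ} {k : ℂ} {a b : ℝ}
    (hd : ∀ x ∈ Icc a b, DifferentiableAt ℝ f x)
    (hf : ∀ x ∈ Icc a b, deriv f x = k * f x) :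
    ∀ x ∈ Icc a b, f x = f a * Complex.exp (k * (x - a)) := by
  set g : ℝ → ℂ := fun x => f x * Complex.exp (-(k * x))
  have hg : ∀ x ∈ Icc a b, HasDerivAt g 0 x := by
    intro x hx
    have hexp : HasDerivAt (fun y : ℝ => -(k * y)) (-k) x := by
      simpa using (((hasDerivAt_id (x : ℂ)).const_mul k).neg).comp_ofReal
    have h : HasDerivAt g (deriv f x * Complex.exp (-(k * x)) +
        f x * (Complex.exp (-(k * x)) * -k)) x :=
      (hd x hx).hasDerivAt.mul hexp.cexp
    rw [hf x hx] at h
    convert h using 1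
    ring
  have hconst := constant_of_has_deriv_right_zero
    (fun x hx => (hg x hx).continuousAt.continuousWithinAt)
    (fun x hx => (hg x (Ico_subset_Icc_self hx)).hasDerivWithinAt)
  intro x hx
  calc f x = g x * Complex.exp (k * x) := by
        simp only [g, mul_assoc, ← Complex.exp_add, neg_add_cancel, Complex.exp_zero, mul_one]
    _ = f a * Complex.exp (k * (x - a)) := by
        rw [hconst x hx, mul_assoc, ← Complex.exp_add]
        ring_nf

theorem transport_eq_mul_cexp {f : ℝ → ℂ} {s lam c : ℂ} {a b : ℝ} (hlam : lam ≠ 0)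
    (hd : ∀ x ∈ Icc a b, DifferentiableAt ℝ f x)
    (hf : ∀ x ∈ Icc a b, s * f x = lam * deriv f x - c * f x) :
    ∀ x ∈ Icc a b, f x = f a * Complex.exp ((s + c) / lam * (x - a)) :=
  eq_mul_cexp_of_deriv_eq_mul hd fun x hx => by
    rw [div_mul_eq_mul_div, eq_div_iff hlam]
    linear_combination -hf x hx

theorem reflection_loop {α₀ α₁ β₀ β₁ p q ξ u w : ℂ}
    (hα : α₁ = α₀ * Complex.exp u) (hβ : β₁ = β₀ * Complex.exp w)
    (h₀ : α₀ = p * β₀ + ξ) (h₁ : β₁ = q * α₁) :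
    (1 - p * q * Complex.exp (u - w)) * α₁ = Complex.exp u * ξ := by
  have hw : Complex.exp w ≠ 0 := Complex.exp_ne_zero w
  rw [Complex.exp_sub]
  field_simp
  linear_combination Complex.exp w * Complex.exp u * h₀ + Complex.exp w * hα
    + p * Complex.exp u * h₁ - p * Complex.exp u * hβ

theorem isUnit_smul_one_sub_of_forall_spectrum_re_neg {n : Type*} [Fintype n] [DecidableEq n]
    {A : Matrix n n ℂ} (hA : ∀ μ ∈ spectrum ℂ A, μ.re < 0) {s : ℂ} (hs : 0 ≤ s.re) :
    IsUnit (s • (1 : Matrix n n ℂ) - A) := by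
  have hs' : s ∉ spectrum ℂ A := fun h => (hA s h).not_ge hs
  rwa [spectrum.notMem_iff, Algebra.algebraMap_eq_smul_one] at hs'

theorem smul_eq_inv_mulVec_smul_of_mulVec_eq {n R : Type*} [Fintype n] [DecidableEq n]
    [CommRing R] {M : Matrix n n R} (hM : IsUnit M) {y w : n → R} (hy : M *ᵥ y = w) (c : R) :
    c • y = M⁻¹ *ᵥ (c • w) := by
  have := hM.invertible
  exact (inv_mulVec_eq_vec (by rw [mulVec_smul, hy])).symm

theorem mulVec_mulVec_col_mul_apply {R l n k : Type*} [Fintype n] [Fintype k] [CommSemiring R]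
    (C : Matrix l n R) (N : Matrix n k R) (B : Matrix k (Fin 1) R) (z : R) (i : l) :
    (C *ᵥ N *ᵥ fun j => B j 0 * z) i = (C * N * B) i 0 * z := by
  have hcol : (fun j => B j 0 * z) = B *ᵥ fun _ => z :=
    funext fun j => by simp [mulVec, dotProduct]
  rw [hcol, mulVec_mulVec, mulVec_mulVec]
  simp [mulVec, dotProduct]

/-- Frequency-domain solution of the full cascade: transport PDEs `α, β` on `[0,1]`,
driving a Hurwitz ODE `(sI - Â₁) Ŷ = B₁ α(1)`, whose output feeds the sensor-delay
transport PDE `v` on `[1,2]`. Then `h(s) Ŷ = (sI-Â₁)⁻¹ B₁ e^{-(c₁+s)/q₁} ξ` and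
`h(s) v(x) = C₁ (sI-Â₁)⁻¹ B₁ e^{-(c₁+s)/q₁} e^{-τ(x-1)s} ξ`. -/
theorem stmt9 (m : ℕ) (s : ℂ) (hs : 0 ≤ s.re)
    (q1 q2 c1 c2 p q τ : ℝ) (hq1 : 0 < q1) (hq2 : 0 < q2) (hτ : 0 < τ) (ξ : ℂ)
    (α β : ℝ → ℂ)
    (hαd : ∀ x ∈ Set.Icc (0 : ℝ) 1, DifferentiableAt ℝ α x)
    (hβd : ∀ x ∈ Set.Icc (0 : ℝ) 1, DifferentiableAt ℝ β x)
    (hα : ∀ x ∈ Set.Icc (0 : ℝ) 1,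
      s * α x = -(q1 : ℂ) * deriv α x - (c1 : ℂ) * α x)
    (hβ : ∀ x ∈ Set.Icc (0 : ℝ) 1,
      s * β x = (q2 : ℂ) * deriv β x - (c2 : ℂ) * β x)
    (hbc0 : α 0 = (p : ℂ) * β 0 + ξ) (hbc1 : β 1 = (q : ℂ) * α 1)
    (A1hat : Matrix (Fin m) (Fin m) ℂ)
    (hHurwitz : ∀ μ ∈ spectrum ℂ A1hat, μ.re < 0)
    (B1 : Matrix (Fin m) (Fin 1) ℂ) (C1 : Matrix (Fin 1) (Fin m) ℂ)
    (Yhat : Fin m → ℂ)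
    (hY : (s • (1 : Matrix (Fin m) (Fin m) ℂ) - A1hat) *ᵥ Yhat
      = fun i => B1 i 0 * α 1)
    (v : ℝ → ℂ)
    (hvd : ∀ x ∈ Set.Icc (1 : ℝ) 2, DifferentiableAt ℝ v x)
    (hv : ∀ x ∈ Set.Icc (1 : ℝ) 2, s * v x = -(1 / (τ : ℂ)) * deriv v x)
    (hv1 : v 1 = (C1 *ᵥ Yhat) 0) :
    ((1 : ℂ) - ((p * q : ℝ) : ℂ) * Complex.exp (-((c2 / q2 + c1 / q1 : ℝ) : ℂ)) *
        Complex.exp (-((1 / q2 + 1 / q1 : ℝ) : ℂ) * s)) • Yhat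
      = (s • (1 : Matrix (Fin m) (Fin m) ℂ) - A1hat)⁻¹ *ᵥ
          (fun i => B1 i 0 * (Complex.exp (-(((c1 : ℂ) + s) / (q1 : ℂ))) * ξ)) ∧
    ∀ x ∈ Set.Icc (1 : ℝ) 2,
      ((1 : ℂ) - ((p * q : ℝ) : ℂ) * Complex.exp (-((c2 / q2 + c1 / q1 : ℝ) : ℂ)) *
          Complex.exp (-((1 / q2 + 1 / q1 : ℝ) : ℂ) * s)) * v x
        = (C1 * (s • (1 : Matrix (Fin m) (Fin m) ℂ) - A1hat)⁻¹ * B1) 0 0 *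
            Complex.exp (-(((c1 : ℂ) + s) / (q1 : ℂ))) *
            Complex.exp (-(τ : ℂ) * ((x : ℂ) - 1) * s) * ξ := by
  have hq1c : (q1 : ℂ) ≠ 0 := by exact_mod_cast hq1.ne'
  have hq2c : (q2 : ℂ) ≠ 0 := by exact_mod_cast hq2.ne'
  have hτc : (τ : ℂ) ≠ 0 := by exact_mod_cast hτ.ne'
  set M := s • (1 : Matrix (Fin m) (Fin m) ℂ) - A1hat
  set E := Complex.exp (-(((c1 : ℂ) + s) / (q1 : ℂ)))
  set H := (1 : ℂ) - ((p * q : ℝ) : ℂ) * Complex.exp (-((c2 / q2 + c1 / q1 : ℝ) : ℂ)) *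
    Complex.exp (-((1 / q2 + 1 / q1 : ℝ) : ℂ) * s)
  have hloop := reflection_loop (transport_eq_mul_cexp (neg_ne_zero.2 hq1c) hαd hα 1 (by simp))
    (transport_eq_mul_cexp hq2c hβd hβ 1 (by simp)) hbc0 hbc1
  have hHα : H * α 1 = E * ξ := by
    convert hloop using 3
    · rw [mul_assoc, ← Complex.exp_add]
      push_cast
      congr 2
      field_simp
      ring
    · push_cast
      field_simp
      ring
  have hY' : H • Yhat = M⁻¹ *ᵥ fun i => B1 i 0 * (E * ξ) := by
    rw [smul_eq_inv_mulVec_smul_of_mulVec_eq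
      (isUnit_smul_one_sub_of_forall_spectrum_re_neg hHurwitz hs) hY H, ← hHα]
    congr 1
    ext i
    simp only [Pi.smul_apply, smul_eq_mul]
    ring
  refine ⟨hY', fun x hx => ?_⟩
  have hv' : ∀ y ∈ Icc (1 : ℝ) 2, s * v y = -(1 / (τ : ℂ)) * deriv v y - 0 * v y := by
    simpa using hv
  have hHv : H * v 1 = (C1 * M⁻¹ * B1) 0 0 * (E * ξ) := by
    rw [hv1, ← mulVec_mulVec_col_mul_apply, ← hY', mulVec_smul]
    rfl
  have hdelay : Complex.exp ((s + 0) / -(1 / (τ : ℂ)) * (x - (1 : ℝ))) =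
      Complex.exp (-(τ : ℂ) * ((x : ℂ) - 1) * s) := by
    congr 1
    push_cast
    field_simp
    ring
  rw [transport_eq_mul_cexp (by simpa using hτc) hvd hv' x hx, hdelay]
  linear_combination Complex.exp (-(τ : ℂ) * ((x : ℂ) - 1) * s) * hHv
end
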